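/- Fix integers k ≥ 2 and a squarefree integer δ coprime to A. Suppose for all primes p ∤ A we have p > k. Let λ be supported on squarefree integers coprime to A, and define y_r = μ(r) f_1(r) Σ' λ_{dr}/f(dr) where f(d) = ∏_{p|d} p/k and f_1(d) = ∏_{p|d}(p-k)/k, with Σ' over squarefree d coprime to A and r. Then T_δ := Σ'_{d,e} λ_d λ_e / f([d,e,δ]/δ) = Σ'_{a, (a,δ)=1} μ²(a)/f_1(a) · (Σ_{s|δ} μ(s) y_{as})², where [d,e,δ] denotes the least common multiple. -/

import Mathlib

/-!
Write `f = ∏_{p ∣ ·} (1 + g₁ p)` and `f₁ = ∏_{p ∣ ·} g₁ p` with `g₁ p = (p - k)/k`, so that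
`f m = ∑_{a ∣ m} f₁ a` for squarefree `m`. Comparing sets of prime factors gives, for squarefree
`d, e`,
`f d · f e = f([d,e,δ]/δ) · f((d,δ)) · f((e,δ)) · ∑_{a ∣ (d,e), (a,δ) = 1} f₁ a`,
so with `u n = λ_n f((n,δ)) / f n` the form `T_δ` becomes `∑_{(a,δ)=1} f₁ a (∑_{a ∣ n} u n)²`.
On the other side `y_m = μ(m) f₁(m) ∑_{m ∣ n} λ_n / f n`, and for `(a,δ) = 1` the multiplicativity
of `μ` and `f₁` together with `∑_{s ∣ (n,δ)} f₁ s = f((n,δ))` give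
`∑_{s ∣ δ} μ(s) y_{as} = μ(a) f₁(a) ∑_{a ∣ n} u n`.
-/

open Finset ArithmeticFunction
open scoped ArithmeticFunction.Moebius

namespace Nat

theorem primeFactors_lcm {a b : ℕ} (ha : a ≠ 0) (hb : b ≠ 0) :
    (a.lcm b).primeFactors = a.primeFactors ∪ b.primeFactors := by
  simp_rw [← support_factorization, factorization_lcm ha hb, Finsupp.support_sup]

theorem squarefree_lcm {a b : ℕ} (ha : Squarefree a) (hb : Squarefree b) :
    Squarefree (a.lcm b) := by
  refine squarefree_of_factorization_le_one (lcm_ne_zero ha.ne_zero hb.ne_zero) fun p => ?_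
  rw [factorization_lcm ha.ne_zero hb.ne_zero]
  exact sup_le (ha.natFactorization_le_one p) (hb.natFactorization_le_one p)

theorem lcm_div_right {n : ℕ} (m : ℕ) (hn : n ≠ 0) : m.lcm n / n = m / m.gcd n := by
  rw [Nat.lcm, Nat.div_div_eq_div_mul, Nat.mul_div_mul_right _ _ (pos_of_ne_zero hn)]

theorem primeFactors_lcm_lcm_div {d e δ : ℕ} (hd : Squarefree d) (he : Squarefree e)
    (hδ : δ ≠ 0) :
    ((d.lcm e).lcm δ / δ).primeFactors = (d.primeFactors ∪ e.primeFactors) \ δ.primeFactors := by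
  rw [lcm_div_right _ hδ, primeFactors_div_gcd (squarefree_lcm hd he) hδ,
    primeFactors_lcm hd.ne_zero he.ne_zero]

theorem divisors_gcd_eq_filter_dvd {n δ : ℕ} (hδ : δ ≠ 0) :
    (n.gcd δ).divisors = {s ∈ δ.divisors | s ∣ n} := by
  ext s
  simp [dvd_gcd_iff, hδ, and_comm]

theorem sum_divisors_prod_primeFactors {R : Type*} [CommSemiring R] (g : ℕ → R) {n : ℕ}
    (hn : Squarefree n) :
    ∑ d ∈ n.divisors, ∏ p ∈ d.primeFactors, g p = ∏ p ∈ n.primeFactors, (1 + g p) := by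
  calc ∑ d ∈ n.divisors, ∏ p ∈ d.primeFactors, g p
      = ∑ d ∈ n.divisors, prodPrimeFactors g d := sum_congr rfl fun d hd =>
        (prodPrimeFactors_apply (f := g) (pos_of_mem_divisors hd).ne').symm
    _ = ∏ p ∈ n.primeFactors, (1 + prodPrimeFactors g p) :=
        ((IsMultiplicative.prodPrimeFactors g).prodPrimeFactors_one_add_of_squarefree hn).symm
    _ = ∏ p ∈ n.primeFactors, (1 + g p) := prod_congr rfl fun p hp => by
        have hp := prime_of_mem_primeFactors hp
        rw [prodPrimeFactors_apply hp.ne_zero, hp.primeFactors, prod_singleton]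

theorem sum_divisors_filter_coprime_prod_primeFactors {R : Type*} [CommSemiring R] (g : ℕ → R)
    {n c : ℕ} (hn : Squarefree n) (hc : c ≠ 0) :
    ∑ a ∈ n.divisors with a.Coprime c, ∏ p ∈ a.primeFactors, g p =
      ∏ p ∈ n.primeFactors \ c.primeFactors, (1 + g p) := by
  -- killing `g` on the primes of `c` makes the product vanish exactly off the filter
  have hkill : ∀ a ∈ n.divisors, (if a.Coprime c then ∏ p ∈ a.primeFactors, g p else 0) =
      ∏ p ∈ a.primeFactors, if p ∈ c.primeFactors then 0 else g p := by
    intro a ha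
    split_ifs with h <;> rw [← disjoint_primeFactors (pos_of_mem_divisors ha).ne' hc] at h
    · exact prod_congr rfl fun p hp => (if_neg (disjoint_left.1 h hp)).symm
    · obtain ⟨p, hpa, hpc⟩ := not_disjoint_iff.1 h
      exact (prod_eq_zero (f := fun p => if p ∈ c.primeFactors then 0 else g p) hpa
        (if_pos hpc)).symm
  rw [sum_filter, sum_congr rfl hkill, sum_divisors_prod_primeFactors _ hn,
    ← prod_inter_mul_prod_sdiff n.primeFactors c.primeFactors,
    prod_eq_one fun p hp => by rw [if_pos (mem_inter.1 hp).2, add_zero], one_mul]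
  exact prod_congr rfl fun p hp => by rw [if_neg (mem_sdiff.1 hp).2]

end Nat

theorem Finset.prod_mul_prod_eq_prod_sdiff_mul {ι M : Type*} [CommMonoid M] [DecidableEq ι]
    (g : ι → M) (s t u : Finset ι) :
    (∏ i ∈ s, g i) * ∏ i ∈ t, g i =
      (∏ i ∈ (s ∪ t) \ u, g i) * (∏ i ∈ s ∩ u, g i) * (∏ i ∈ t ∩ u, g i) *
        ∏ i ∈ (s ∩ t) \ u, g i := by
  rw [← prod_union_inter, ← prod_inter_mul_prod_sdiff (s ∪ t) u,
    ← prod_inter_mul_prod_sdiff (s ∩ t) u, union_inter_distrib_right, inter_inter_distrib_right,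
    mul_mul_mul_comm, prod_union_inter]
  ac_rfl

theorem sum_sum_mul_sum_filter_dvd {R : Type*} [CommSemiring R] (D S : Finset ℕ)
    (u w : ℕ → R) :
    ∑ d ∈ D, ∑ e ∈ D, u d * u e * ∑ a ∈ S with a ∣ d ∧ a ∣ e, w a =
      ∑ a ∈ S, w a * (∑ n ∈ D with a ∣ n, u n) ^ 2 := by
  simp_rw [sum_filter, sq, sum_mul_sum, mul_sum, ite_zero_mul_ite_zero, mul_ite, mul_zero]
  refine (sum_congr rfl fun d _ => sum_comm).trans (sum_comm.trans
    (sum_congr rfl fun a _ => sum_congr rfl fun d _ => sum_congr rfl fun e _ => ?_))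
  split_ifs <;> ring

theorem sum_divisors_mul_sum_filter_mul_dvd {R : Type*} [CommSemiring R] (S : Finset ℕ)
    (w φ : ℕ → R) {a δ : ℕ} (ha : a.Coprime δ) (hδ : δ ≠ 0) :
    ∑ s ∈ δ.divisors, w s * ∑ n ∈ S with a * s ∣ n, φ n =
      ∑ n ∈ S with a ∣ n, φ n * ∑ s ∈ (n.gcd δ).divisors, w s := by
  have hdvd : ∀ n, a ∣ n → ∀ s ∈ δ.divisors, (a * s ∣ n ↔ s ∣ n) := fun n han s hs =>
    ⟨dvd_of_mul_left_dvd,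
      (ha.coprime_dvd_right (Nat.dvd_of_mem_divisors hs)).mul_dvd_of_dvd_of_dvd han⟩
  simp_rw [mul_sum, sum_filter]
  rw [sum_comm]
  refine sum_congr rfl fun n _ => ?_
  split_ifs with han
  · rw [Nat.divisors_gcd_eq_filter_dvd hδ, sum_filter]
    refine sum_congr rfl fun s hs => ?_
    simp only [hdvd n han s hs]
    split_ifs <;> ring
  · exact sum_eq_zero fun s _ => by rw [if_neg fun h => han (dvd_of_mul_right_dvd h)]

theorem sum_filter_coprime_mul_eq_sum_filter_dvd {M : Type*} [AddCommMonoid M] {A R m : ℕ}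
    (φ : ℕ → M) (hφ : ∀ n, φ n ≠ 0 → Squarefree n ∧ n.Coprime A ∧ n < R) (hm : m ≠ 0) :
    ∑ d ∈ range R with Squarefree d ∧ d.Coprime A ∧ d.Coprime m, φ (d * m) =
      ∑ n ∈ {n ∈ range R | Squarefree n ∧ n.Coprime A} with m ∣ n, φ n := by
  refine sum_bij_ne_zero (fun d _ _ => d * m) (fun d _ hd => ?_) (fun d₁ _ _ d₂ _ _ h => ?_)
    (fun n hn _ => ?_) (fun _ _ _ => rfl)
  · obtain ⟨hsq, hA, hR⟩ := hφ _ hd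
    exact mem_filter.2 ⟨mem_filter.2 ⟨mem_range.2 hR, hsq, hA⟩, dvd_mul_left m d⟩
  · exact Nat.eq_of_mul_eq_mul_right (Nat.pos_of_ne_zero hm) h
  · obtain ⟨⟨hnR, hsq, hA⟩, hmn⟩ := by simpa using hn
    have hq : n / m * m = n := Nat.div_mul_cancel hmn
    have hqn : n / m ∣ n := Nat.div_dvd_of_dvd hmn
    refine ⟨n / m, ?_, by rwa [hq], hq⟩
    simp only [mem_filter, mem_range]
    exact ⟨(Nat.div_le_self n m).trans_lt hnR, hsq.squarefree_of_dvd hqn,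
      hA.coprime_dvd_left hqn, Nat.coprime_of_squarefree_mul (by rwa [hq])⟩

theorem filter_dvd_and_dvd_eq_filter_divisors_gcd {A R d e δ : ℕ} (hd : Squarefree d)
    (hdA : d.Coprime A) (hdR : d < R) (he : e ≠ 0) :
    ({a ∈ range R | Squarefree a ∧ a.Coprime A ∧ a.Coprime δ}.filter fun a => a ∣ d ∧ a ∣ e) =
      {a ∈ (d.gcd e).divisors | a.Coprime δ} := by
  ext a
  simp only [mem_filter, mem_range, Nat.mem_divisors, Nat.dvd_gcd_iff,
    Nat.gcd_ne_zero_right he, ne_eq, not_false_eq_true, and_true]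
  constructor
  · rintro ⟨⟨-, -, -, haδ⟩, hda⟩
    exact ⟨hda, haδ⟩
  · rintro ⟨⟨had, hae⟩, haδ⟩
    exact ⟨⟨(Nat.le_of_dvd (Nat.pos_of_ne_zero hd.ne_zero) had).trans_lt hdR,
      hd.squarefree_of_dvd had, hdA.coprime_dvd_left had, haδ⟩, had, hae⟩

theorem mul_eq_apply_lcm_div_mul_sum_divisors_gcd {R : Type*} [CommSemiring R]
    {g₁ f f₁ : ℕ → R} (hf : ∀ n, f n = ∏ p ∈ n.primeFactors, (1 + g₁ p))
    (hf₁ : ∀ n, f₁ n = ∏ p ∈ n.primeFactors, g₁ p) {d e δ : ℕ} (hd : Squarefree d)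
    (he : Squarefree e) (hδ : δ ≠ 0) :
    f d * f e = f ((d.lcm e).lcm δ / δ) * f (d.gcd δ) * f (e.gcd δ) *
      ∑ a ∈ (d.gcd e).divisors with a.Coprime δ, f₁ a := by
  simp only [hf, hf₁]
  rw [Nat.sum_divisors_filter_coprime_prod_primeFactors _
      (hd.squarefree_of_dvd (Nat.gcd_dvd_left d e)) hδ,
    Nat.primeFactors_lcm_lcm_div hd he hδ, Nat.primeFactors_gcd hd.ne_zero hδ,
    Nat.primeFactors_gcd he.ne_zero hδ, Nat.primeFactors_gcd hd.ne_zero he.ne_zero]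
  exact prod_mul_prod_eq_prod_sdiff_mul _ _ _ _

theorem sum_divisors_moebius_mul_eq {R : Type*} [Field R] {g₁ f f₁ lam y : ℕ → R} {D : Finset ℕ} {a δ : ℕ}
    (hf : ∀ n, f n = ∏ p ∈ n.primeFactors, (1 + g₁ p))
    (hf₁ : ∀ n, f₁ n = ∏ p ∈ n.primeFactors, g₁ p)
    (hy : ∀ m ≠ 0, y m = μ m * f₁ m * ∑ n ∈ D with m ∣ n, lam n / f n)
    (hδ : Squarefree δ) (ha : a.Coprime δ) (ha0 : a ≠ 0) :
    ∑ s ∈ δ.divisors, (μ s : R) * y (a * s) =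
      μ a * f₁ a * ∑ n ∈ D with a ∣ n, lam n * f (n.gcd δ) / f n := by
  calc ∑ s ∈ δ.divisors, (μ s : R) * y (a * s)
      = ∑ s ∈ δ.divisors, μ a * f₁ a * (f₁ s * ∑ n ∈ D with a * s ∣ n, lam n / f n) := by
        refine sum_congr rfl fun s hs => ?_
        have hsδ := Nat.dvd_of_mem_divisors hs
        have has : a.Coprime s := ha.coprime_dvd_right hsδ
        have hμs : (μ s : R) ^ 2 = 1 := by
          rw [← Int.cast_pow, moebius_sq_eq_one_of_squarefree (hδ.squarefree_of_dvd hsδ),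
            Int.cast_one]
        rw [hy _ (mul_ne_zero ha0 (Nat.pos_of_mem_divisors hs).ne'),
          isMultiplicative_moebius.map_mul_of_coprime has, Int.cast_mul, hf₁, hf₁, hf₁,
          has.primeFactors_mul, prod_union has.disjoint_primeFactors]
        linear_combination (μ a * (∏ p ∈ a.primeFactors, g₁ p) *
          (∏ p ∈ s.primeFactors, g₁ p) * ∑ n ∈ D with a * s ∣ n, lam n / f n) * hμs
    _ = μ a * f₁ a * ∑ n ∈ D with a ∣ n, lam n * f (n.gcd δ) / f n := by
        rw [← mul_sum, sum_divisors_mul_sum_filter_mul_dvd _ _ _ ha hδ.ne_zero]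
        refine congrArg _ (sum_congr rfl fun n _ => ?_)
        simp only [hf, hf₁]
        rw [Nat.sum_divisors_prod_primeFactors _ (hδ.squarefree_of_dvd (Nat.gcd_dvd_right n δ)),
          div_mul_eq_mul_div]

theorem prod_primeFactors_div_ne_zero {k : ℕ} (hk : k ≠ 0) (n : ℕ) :
    ∏ p ∈ n.primeFactors, ((p : ℝ) / k) ≠ 0 :=
  prod_ne_zero_iff.2 fun _ hp => div_ne_zero
    (Nat.cast_ne_zero.2 (Nat.prime_of_mem_primeFactors hp).ne_zero) (Nat.cast_ne_zero.2 hk)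

theorem prod_primeFactors_sub_div_ne_zero {k A a : ℕ} (hk : k ≠ 0)
    (hkp : ∀ p : ℕ, p.Prime → ¬ p ∣ A → k < p) (ha : a.Coprime A) :
    ∏ p ∈ a.primeFactors, (((p : ℝ) - k) / k) ≠ 0 := by
  refine prod_ne_zero_iff.2 fun p hp => div_ne_zero (sub_ne_zero.2 ?_) (Nat.cast_ne_zero.2 hk)
  have hp' := Nat.prime_of_mem_primeFactors hp
  have hpA : ¬ p ∣ A :=
    hp'.coprime_iff_not_dvd.1 (ha.coprime_dvd_left (Nat.dvd_of_mem_primeFactors hp))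
  exact_mod_cast (hkp p hp' hpA).ne'

theorem selberg_diagonalization_general (k A R₂ δ : ℕ) (hk : 2 ≤ k)
    (hδ : Squarefree δ)
    (hkp : ∀ p : ℕ, p.Prime → ¬ p ∣ A → k < p)
    (lam : ℕ → ℝ)
    (hsupp : ∀ d : ℕ, lam d ≠ 0 → Squarefree d ∧ Nat.Coprime d A ∧ d < R₂)
    (f f₁ : ℕ → ℝ)
    (hf : ∀ d : ℕ, f d = ∏ p ∈ d.primeFactors, ((p : ℝ) / k))
    (hf₁ : ∀ d : ℕ, f₁ d = ∏ p ∈ d.primeFactors, (((p : ℝ) - k) / k))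
    (y : ℕ → ℝ)
    (hy : ∀ r : ℕ, y r =
      ((ArithmeticFunction.moebius r : ℤ) : ℝ) * f₁ r *
        ∑ d ∈ (Finset.range R₂).filter
            (fun d => Squarefree d ∧ Nat.Coprime d A ∧ Nat.Coprime d r),
          lam (d * r) / f (d * r)) :
    ∑ d ∈ (Finset.range R₂).filter (fun d => Squarefree d ∧ Nat.Coprime d A),
      ∑ e ∈ (Finset.range R₂).filter (fun e => Squarefree e ∧ Nat.Coprime e A),
        lam d * lam e / f (Nat.lcm (Nat.lcm d e) δ / δ)
      = ∑ a ∈ (Finset.range R₂).filter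
            (fun a => Squarefree a ∧ Nat.Coprime a A ∧ Nat.Coprime a δ),
          ((ArithmeticFunction.moebius a : ℤ) : ℝ) ^ 2 / f₁ a *
            (∑ s ∈ δ.divisors, ((ArithmeticFunction.moebius s : ℤ) : ℝ) * y (a * s)) ^ 2 := by
  have hk0 : k ≠ 0 := by omega
  have hf' (n : ℕ) : f n = ∏ p ∈ n.primeFactors, (1 + ((p : ℝ) - k) / k) := by
    rw [hf]; exact prod_congr rfl fun p _ => by field_simp; ring
  have hf_ne (n : ℕ) : f n ≠ 0 := by rw [hf]; exact prod_primeFactors_div_ne_zero hk0 n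
  have hf₁_ne {a : ℕ} (haA : a.Coprime A) : f₁ a ≠ 0 := by
    rw [hf₁]; exact prod_primeFactors_sub_div_ne_zero hk0 hkp haA
  set D := {n ∈ range R₂ | Squarefree n ∧ n.Coprime A}
  set S := {a ∈ range R₂ | Squarefree a ∧ a.Coprime A ∧ a.Coprime δ}
  have hy' (m : ℕ) (hm : m ≠ 0) : y m = μ m * f₁ m * ∑ n ∈ D with m ∣ n, lam n / f n := by
    rw [hy, sum_filter_coprime_mul_eq_sum_filter_dvd (fun n => lam n / f n)
      (fun n h => hsupp n (div_ne_zero_iff.1 h).1) hm]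
  set u : ℕ → ℝ := fun n => lam n * f (n.gcd δ) / f n
  calc _ = ∑ d ∈ D, ∑ e ∈ D, u d * u e * ∑ a ∈ S with a ∣ d ∧ a ∣ e, f₁ a := by
        refine sum_congr rfl fun d hd => sum_congr rfl fun e he => ?_
        obtain ⟨hdR, hd, hdA⟩ := by simpa [D] using hd
        obtain ⟨-, he, -⟩ := by simpa [D] using he
        rw [filter_dvd_and_dvd_eq_filter_divisors_gcd hd hdA hdR he.ne_zero, div_eq_iff (hf_ne _)]
        simp only [u]
        field_simp [hf_ne d, hf_ne e]
        linear_combination lam d * lam e *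
          mul_eq_apply_lcm_div_mul_sum_divisors_gcd hf' hf₁ hd he hδ.ne_zero
    _ = ∑ a ∈ S, f₁ a * (∑ n ∈ D with a ∣ n, u n) ^ 2 := sum_sum_mul_sum_filter_dvd _ _ _ _
    _ = _ := sum_congr rfl fun a ha => by
        obtain ⟨-, ha, haA, haδ⟩ := by simpa [S] using ha
        have hμa : (μ a : ℝ) ^ 2 = 1 := by exact_mod_cast moebius_sq_eq_one_of_squarefree ha
        rw [sum_divisors_moebius_mul_eq hf' hf₁ hy' hδ haδ ha.ne_zero, mul_pow, mul_pow, hμa]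
        field_simp [hf₁_ne haA]
        rfl

/-- Diagonalization of the Selberg quadratic form twisted by a squarefree `δ` coprime to `A`:
with `k ≥ 2`, `k < p` for every prime `p ∤ A`, `λ` supported on squarefree integers below `R₂`
coprime to `A`, `f(d) = ∏_{p ∣ d} p/k`, `f₁(d) = ∏_{p ∣ d} (p-k)/k` and
`y_r = μ(r) f₁(r) Σ'_d λ_{dr}/f(dr)`, we have
`T_δ = Σ'_{d,e} λ_d λ_e / f([d,e,δ]/δ) = Σ'_{a, (a,δ)=1} μ²(a)/f₁(a) (Σ_{s ∣ δ} μ(s) y_{as})²`. -/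
theorem selberg_diagonalization (k A R₂ δ : ℕ) (hk : 2 ≤ k)
    (hδ : Squarefree δ) (hδA : Nat.Coprime δ A)
    (hkp : ∀ p : ℕ, p.Prime → ¬ p ∣ A → k < p)
    (lam : ℕ → ℝ)
    (hsupp : ∀ d : ℕ, lam d ≠ 0 → Squarefree d ∧ Nat.Coprime d A ∧ d < R₂)
    (f f₁ : ℕ → ℝ)
    (hf : ∀ d : ℕ, f d = ∏ p ∈ d.primeFactors, ((p : ℝ) / k))
    (hf₁ : ∀ d : ℕ, f₁ d = ∏ p ∈ d.primeFactors, (((p : ℝ) - k) / k))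
    (y : ℕ → ℝ)
    (hy : ∀ r : ℕ, y r =
      ((ArithmeticFunction.moebius r : ℤ) : ℝ) * f₁ r *
        ∑ d ∈ (Finset.range R₂).filter
            (fun d => Squarefree d ∧ Nat.Coprime d A ∧ Nat.Coprime d r),
          lam (d * r) / f (d * r)) :
    ∑ d ∈ (Finset.range R₂).filter (fun d => Squarefree d ∧ Nat.Coprime d A),
      ∑ e ∈ (Finset.range R₂).filter (fun e => Squarefree e ∧ Nat.Coprime e A),
        lam d * lam e / f (Nat.lcm (Nat.lcm d e) δ / δ)
      = ∑ a ∈ (Finset.range R₂).filter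
            (fun a => Squarefree a ∧ Nat.Coprime a A ∧ Nat.Coprime a δ),
          ((ArithmeticFunction.moebius a : ℤ) : ℝ) ^ 2 / f₁ a *
            (∑ s ∈ δ.divisors, ((ArithmeticFunction.moebius s : ℤ) : ℝ) * y (a * s)) ^ 2 :=
  selberg_diagonalization_general k A R₂ δ hk hδ hkp lam hsupp f f₁ hf hf₁ y hy
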